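/- Assume the sequence of substitutions $(S_{a_n})$ is primitive. Then every tiling $x\in X_{\bar a}$ is repetitive: for every finite patch $x'\subset x$ there exists $r(x')>0$ such that every closed ball $B$ of radius $r(x')$ in $\mathbb R^d$ satisfies $\operatorname{supp}(\vec t+x')\subseteq B$ and $\vec t+x'\subset x$ for some $\vec t\in\mathbb R^d$. -/

import Mathlib

open Filter Topology Set Metric MeasureTheory

noncomputable section

/-- Points of `ℝ^d`. -/
abbrev Pt (d : ℕ) := EuclideanSpace ℝ (Fin d)

/-- A patch is a collection of subsets of `ℝ^d` (intended: tiles with disjoint interiors). -/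
abbrev Patch (d : ℕ) := Set (Set (Pt d))

/-- Translation of a single tile. -/
def tileTrans {d : ℕ} (t : Pt d) (D : Set (Pt d)) : Set (Pt d) := (fun p => t + p) '' D

/-- Translation of a patch, `t + x`. -/
def patchTrans {d : ℕ} (t : Pt d) (x : Patch d) : Patch d := tileTrans t '' x

/-- A tile: compact, connected, and the closure of its interior. -/
def IsTile {d : ℕ} (D : Set (Pt d)) : Prop :=
  IsCompact D ∧ IsConnected D ∧ D = closure (interior D)

/-- A patch: a collection of tiles with pairwise disjoint interiors. -/
def IsPatch {d : ℕ} (x : Patch d) : Prop :=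
  (∀ D ∈ x, IsTile D) ∧
  ∀ D ∈ x, ∀ D' ∈ x, D ≠ D' → interior D ∩ interior D' = ∅

/-- The support of a patch: the union of its tiles. -/
def psupp {d : ℕ} (x : Patch d) : Set (Pt d) := ⋃ D ∈ x, D

/-- A tiling of `ℝ^d`: a patch whose support is all of `ℝ^d`. -/
def IsTiling {d : ℕ} (x : Patch d) : Prop := IsPatch x ∧ psupp x = univ

/-- The tiles occurring in tilings of `X`. -/
def TilesOf {d : ℕ} (X : Set (Patch d)) : Set (Set (Pt d)) := {D | ∃ x ∈ X, D ∈ x}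

/-- `𝒫(X)`: the finite patches contained in tilings of `X`. -/
def Patches {d : ℕ} (X : Set (Patch d)) : Set (Patch d) :=
  {x' | x'.Finite ∧ ∃ x ∈ X, x' ⊆ x}

/-- `𝒫^N(X)`: the patches with `N` tiles contained in tilings of `X`. -/
def PatchesCard {d : ℕ} (X : Set (Patch d)) (N : ℕ) : Set (Patch d) :=
  {x' | x'.Finite ∧ x'.ncard = N ∧ ∃ x ∈ X, x' ⊆ x}

/-- `X` is invariant under the translation action. -/
def TransInvariant {d : ℕ} (X : Set (Patch d)) : Prop :=
  ∀ t : Pt d, ∀ x ∈ X, patchTrans t x ∈ X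

/-- Finite local complexity: for each `N` there are only finitely many `N`-tile patches
in tilings of `X` up to translation. -/
def FLC {d : ℕ} (X : Set (Patch d)) : Prop :=
  ∀ N : ℕ, ∃ F : Finset (Patch d),
    ∀ x' ∈ PatchesCard X N, ∃ y ∈ F, ∃ t : Pt d, patchTrans t y = x'

/-- The tiling metric `d_T`. -/
def dT {d : ℕ} (x y : Patch d) : ℝ :=
  sInf ({Real.sqrt 2 / 2} ∪
    {r : ℝ | 0 < r ∧ r < Real.sqrt 2 / 2 ∧
      ∃ x' ⊆ x, ∃ y' ⊆ y,
        Bornology.IsBounded (psupp x') ∧ Bornology.IsBounded (psupp y') ∧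
        closedBall (0 : Pt d) (1 / r) ⊆ psupp x' ∧
        closedBall (0 : Pt d) (1 / r) ⊆ psupp y' ∧
        ∃ t : Pt d, ‖t‖ ≤ r ∧ patchTrans t x' = y'})

/-- A (self-similar) substitution on the tiles of `X`, with dilatation factor `lam`,
extended tile-by-tile to patches, mapping finite patches of `X` to finite patches of `X`
and tilings of `X` to tilings of `X`. -/
structure Substitution (d : ℕ) (X : Set (Patch d)) where
  map : Set (Pt d) → Patch d
  lam : ℝ
  one_lt_lam : 1 < lam
  supp_eq : ∀ D ∈ TilesOf X, psupp (map D) = (fun p => lam • p) '' D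
  equivar : ∀ (t : Pt d) (D : Set (Pt d)), map (tileTrans t D) = patchTrans (lam • t) (map D)
  maps_patches : ∀ x' ∈ Patches X, (⋃ D ∈ x', map D) ∈ Patches X
  maps_X : ∀ x ∈ X, (⋃ D ∈ x, map D) ∈ X

/-- A substitution applied to a patch, tile by tile. -/
def substPatch {d : ℕ} {X : Set (Patch d)} (S : Substitution d X) (x : Patch d) : Patch d :=
  ⋃ D ∈ x, S.map D

/-- The structure matrix of a substitution with respect to prototiles `Dp`:
entry `(i,j)` is the number of tiles equivalent (translation-equal) to `Dp i` in `S (Dp j)`. -/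
def structMat {d l : ℕ} {X : Set (Patch d)} (Dp : Fin l → Set (Pt d)) (S : Substitution d X) :
    Matrix (Fin l) (Fin l) ℕ :=
  fun i j => {D | D ∈ S.map (Dp j) ∧ ∃ t : Pt d, D = tileTrans t (Dp i)}.ncard

/-- `Dp` is a complete family of pairwise non-equivalent prototiles of `X`. -/
def IsPrototileBasis {d l : ℕ} (X : Set (Patch d)) (Dp : Fin l → Set (Pt d)) : Prop :=
  (∀ i, Dp i ∈ TilesOf X) ∧
  (∀ i j, i ≠ j → ∀ t : Pt d, tileTrans t (Dp i) ≠ Dp j) ∧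
  ∀ D ∈ TilesOf X, ∃ i, ∃ t : Pt d, tileTrans t (Dp i) = D

/-- `S^n_ā = S_{a_1} ∘ S_{a_2} ∘ ⋯ ∘ S_{a_n}` acting on patches (`a 0` plays the role
of `a_1`). -/
def substSeq {d k : ℕ} {X : Set (Patch d)} (S : Fin k → Substitution d X) :
    (ℕ → Fin k) → ℕ → Patch d → Patch d
  | _, 0 => id
  | a, n + 1 => fun x => substPatch (S (a 0)) (substSeq S (fun i => a (i + 1)) n x)

/-- `A^n_ā = A_{a_1} A_{a_2} ⋯ A_{a_n}`. -/
def matSeq {l k : ℕ} (A : Fin k → Matrix (Fin l) (Fin l) ℕ) :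
    (ℕ → Fin k) → ℕ → Matrix (Fin l) (Fin l) ℕ
  | _, 0 => 1
  | a, n + 1 => A (a 0) * matSeq A (fun i => a (i + 1)) n

/-- Primitivity of the sequence of structure matrices `(A_{a_n})`: for every `n` some
product `A_{a_n} A_{a_{n+1}} ⋯ A_{a_{n+N}}` has all entries positive. -/
def SeqPrimitive {l k : ℕ} (A : Fin k → Matrix (Fin l) (Fin l) ℕ) (a : ℕ → Fin k) : Prop :=
  ∀ n : ℕ, ∃ N : ℕ, ∀ p q : Fin l, 0 < matSeq A (fun m => a (n + m)) (N + 1) p q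

/-- The multi-substitution tiling space `X_ā` (with initial tile `D`). -/
def multiSpace {d k : ℕ} {X : Set (Patch d)} (S : Fin k → Substitution d X) (a : ℕ → Fin k)
    (D : Set (Pt d)) : Set (Patch d) :=
  {x | x ∈ X ∧ ∀ x' ⊆ x, x'.Finite →
    ∃ n : ℕ, 0 < n ∧ ∃ t : Pt d, patchTrans t x' ⊆ substSeq S a n {D}}

/-- The substitution tiling space of a single substitution, given by its action
`F` on patches (with initial tile `D`). -/
def substSpaceF {d : ℕ} (X : Set (Patch d)) (F : Patch d → Patch d) (D : Set (Pt d)) :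
    Set (Patch d) :=
  {x | x ∈ X ∧ ∀ x' ⊆ x, x'.Finite →
    ∃ m : ℕ, 0 < m ∧ ∃ t : Pt d, patchTrans t x' ⊆ F^[m] {D}}

open Classical in
/-- The metric on `Σ = {1,…,k}^ℕ`: `d(ā,b̄) = 1/L` where `L` is the least (1-indexed)
position where the sequences differ, and `0` if they are equal. -/
def dSigma {k : ℕ} (a b : ℕ → Fin k) : ℝ :=
  if h : ∃ n, a n ≠ b n then 1 / ((Nat.find h : ℝ) + 1) else 0

/-- The shift `σ` on `Σ`. -/
def seqShift {k : ℕ} (a : ℕ → Fin k) : ℕ → Fin k := fun n => a (n + 1)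

/-- A substitution is recognizable if it is injective on `X`. -/
def Recognizable {d : ℕ} {X : Set (Patch d)} (S : Substitution d X) : Prop :=
  ∀ x ∈ X, ∀ y ∈ X, substPatch S x = substPatch S y → x = y

/-- A substitution is strongly recognizable if it is recognizable and `S(D') ⊆ S(x)`
implies `D' ∈ x` for every tiling `x ∈ X` and tile `D'`. -/
def StronglyRecognizable {d : ℕ} {X : Set (Patch d)} (S : Substitution d X) : Prop :=
  Recognizable S ∧ ∀ x ∈ X, ∀ D' ∈ TilesOf X, S.map D' ⊆ substPatch S x → D' ∈ x

/-- `L_{x'}(y')`: the number of translated copies of `x'` contained in `y'`. -/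
def Lcount {d : ℕ} (x' y' : Patch d) : ℕ := {t : Pt d | patchTrans t x' ⊆ y'}.ncard

/-- The Euclidean volume of the support of a patch. -/
def pvol {d : ℕ} (y' : Patch d) : ℝ := (volume (psupp y')).toReal

/-- `L^x_{x'}(H)`: the number of translated copies of `x'` contained in `x` whose support
is contained in `H`. -/
def LcountIn {d : ℕ} (x x' : Patch d) (H : Set (Pt d)) : ℕ :=
  {t : Pt d | patchTrans t x' ⊆ x ∧ psupp (patchTrans t x') ⊆ H}.ncard

/-- `H^{+r}`: the set of points at distance at most `r` from `H`. -/
def plusR {d : ℕ} (H : Set (Pt d)) (r : ℝ) : Set (Pt d) := {t | ∃ h ∈ H, dist t h ≤ r}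

/-- Van Hove sequence of subsets of `ℝ^d`. -/
def VanHove {d : ℕ} (H : ℕ → Set (Pt d)) : Prop :=
  ∀ r : ℝ, 0 ≤ r →
    Tendsto (fun n => (volume (plusR (frontier (H n)) r)).toReal / (volume (H n)).toReal)
      atTop (nhds 0)

/-- A tiling of `X_ā` which is an increasing union of translates of the supertiles
`S^{k_n}_ā(D)`. -/
def Hierarchical {d k : ℕ} {X : Set (Patch d)} (S : Fin k → Substitution d X) (a : ℕ → Fin k)
    (x : Patch d) : Prop :=
  ∃ (kn : ℕ → ℕ) (tn : ℕ → Pt d) (D : Set (Pt d)), D ∈ TilesOf X ∧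
    Tendsto kn atTop atTop ∧
    (∀ n, patchTrans (tn n) (substSeq S a (kn n) {D}) ⊆
      patchTrans (tn (n + 1)) (substSeq S a (kn (n + 1)) {D})) ∧
    x = ⋃ n, patchTrans (tn n) (substSeq S a (kn n) {D})

/-- The topology on the space of patches generated by the `d_T`-balls. -/
def tilingTopology (d : ℕ) : TopologicalSpace (Patch d) :=
  TopologicalSpace.generateFrom {U | ∃ (x : Patch d) (r : ℝ), 0 < r ∧ U = {y | dT x y < r}}

/-- The Borel σ-algebra associated to the tiling topology. -/
def tilingMeasurable (d : ℕ) : MeasurableSpace (Patch d) :=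
  @borel (Patch d) (tilingTopology d)

/-- A Borel probability measure concentrated on `Y` and invariant under the translation
action. -/
def GoodMeasure {d : ℕ} (Y : Set (Patch d))
    (μ : @MeasureTheory.Measure (Patch d) (tilingMeasurable d)) : Prop :=
  letI := tilingMeasurable d
  μ Set.univ = 1 ∧ μ Yᶜ = 0 ∧
    ∀ (t : Pt d) (s : Set (Patch d)), μ (patchTrans t ⁻¹' s) = μ s

/-- `ν` is the pushforward of `μ` under `F`. -/
def PushForwardEq {d : ℕ} (F : Patch d → Patch d)
    (μ ν : @MeasureTheory.Measure (Patch d) (tilingMeasurable d)) : Prop :=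
  letI := tilingMeasurable d
  ∀ s : Set (Patch d), μ (F ⁻¹' s) = ν s

/-!
Let the finite patch `x'` sit in the level-`n` supertile `S^n_ā(D)`, let `A_{a_n} ⋯ A_{a_{n+N}}`
be positive and put `m = n + N + 1`. Positivity means that `S^{N+1}_{σ^n ā}` of any tile contains
a translate of every prototile, so every level-`m` supertile
`S^m_ā(E) = S^n_ā(S^{N+1}_{σ^n ā}(E))` contains a copy of `S^n_ā(D)`, hence of `x'`. Tiles have
uniformly bounded diameter, so level-`m` supertiles have diameter at most some `ρ₀`. Cover a
ball of radius `ρ > ρ₀` in `x` by finitely many tiles: this patch is a translate of part of a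
supertile `S^M_ā(D)`, which is too large for `M < m`. Splitting it into level-`m` supertiles,
the one through the centre of the ball stays inside the ball, so its tiles, and the copy of `x'`
among them, are tiles of `x`.
-/

open scoped Pointwise

section Translation

variable {d : ℕ}

lemma tileTrans_eq_vadd (t : Pt d) (D : Set (Pt d)) : tileTrans t D = t +ᵥ D := rfl

lemma tileTrans_tileTrans (s t : Pt d) (D : Set (Pt d)) :
    tileTrans s (tileTrans t D) = tileTrans (s + t) D :=
  vadd_vadd s t D

lemma patchTrans_patchTrans (s t : Pt d) (x : Patch d) :
    patchTrans s (patchTrans t x) = patchTrans (s + t) x := by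
  simp only [patchTrans, Set.image_image, tileTrans_tileTrans]

lemma patchTrans_mono (t : Pt d) : Monotone (patchTrans (d := d) t) :=
  fun _ _ h => Set.image_mono h

lemma tileTrans_mem_patchTrans {x : Patch d} {D : Set (Pt d)} (h : D ∈ x) (t : Pt d) :
    tileTrans t D ∈ patchTrans t x :=
  Set.mem_image_of_mem _ h

lemma patchTrans_singleton (t : Pt d) (D : Set (Pt d)) :
    patchTrans t {D} = {tileTrans t D} :=
  Set.image_singleton

lemma psupp_mono : Monotone (psupp (d := d)) :=
  fun _ _ h => Set.biUnion_subset_biUnion_left h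

lemma subset_psupp {x : Patch d} {D : Set (Pt d)} (hD : D ∈ x) : D ⊆ psupp x :=
  Set.subset_biUnion_of_mem (u := id) hD

lemma psupp_singleton (D : Set (Pt d)) : psupp ({D} : Patch d) = D := by
  simp [psupp]

lemma psupp_biUnion {ι : Type*} (s : Set ι) (f : ι → Patch d) :
    psupp (⋃ i ∈ s, f i) = ⋃ i ∈ s, psupp (f i) := by
  ext p
  simp only [psupp, Set.mem_iUnion, exists_prop]
  tauto

lemma psupp_patchTrans (t : Pt d) (x : Patch d) : psupp (patchTrans t x) = t +ᵥ psupp x := by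
  simp only [psupp, patchTrans, Set.biUnion_image, Set.vadd_set_iUnion₂, tileTrans_eq_vadd]

lemma patchTrans_subset_patchTrans_iff (t : Pt d) {x y : Patch d} :
    patchTrans t x ⊆ patchTrans t y ↔ x ⊆ y :=
  Set.image_subset_image_iff fun D E h => by simpa [tileTrans_eq_vadd] using h

lemma psupp_patchTrans_subset_closedBall_iff (t : Pt d) {x : Patch d} {c : Pt d} {ρ : ℝ} :
    psupp (patchTrans t x) ⊆ closedBall (t + c) ρ ↔ psupp x ⊆ closedBall c ρ := by
  rw [psupp_patchTrans, ← vadd_eq_add, ← vadd_closedBall, Set.vadd_set_subset_vadd_set_iff]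

lemma IsCompact.eq_zero_of_vadd_eq {E : Set (Pt d)} (hE : IsCompact E) (hne : E.Nonempty)
    {v : Pt d} (h : v +ᵥ E = E) : v = 0 := by
  obtain ⟨p, hp, hmax⟩ := hE.exists_isMaxOn hne (f := fun q => inner ℝ q v) (by fun_prop)
  have hpv : v + p ∈ E := h ▸ Set.vadd_mem_vadd_set hp
  have : inner ℝ (v + p) v ≤ inner ℝ p v := hmax hpv
  rw [inner_add_left, real_inner_self_eq_norm_sq] at this
  exact norm_eq_zero.1 (pow_eq_zero_iff two_ne_zero |>.1 (by nlinarith [sq_nonneg ‖v‖]))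

lemma tileTrans_left_injective {E : Set (Pt d)} (hE : IsCompact E) (hne : E.Nonempty) :
    Function.Injective (tileTrans · E) := by
  intro u v huv
  have : (-v + u) +ᵥ E = E := by
    rw [← vadd_vadd]
    exact (congrArg (-v +ᵥ ·) huv).trans (neg_vadd_vadd v E)
  exact neg_add_eq_zero.1 (hE.eq_zero_of_vadd_eq hne this) |>.symm

end Translation

lemma finite_of_isBounded_of_pairwise_le_dist {E : Type*} [PseudoMetricSpace E] [ProperSpace E]
    {s : Set E} {δ : ℝ} (hδ : 0 < δ) (hs : Bornology.IsBounded s)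
    (hsep : s.Pairwise fun u v => δ ≤ dist u v) : s.Finite := by
  obtain ⟨t, ht, hst⟩ := Metric.totallyBounded_iff.1
    (hs.isCompact_closure.totallyBounded.subset subset_closure) (δ / 2) (half_pos hδ)
  have hcover : s ⊆ ⋃ y ∈ t, s ∩ ball y (δ / 2) := fun u hu => by
    obtain ⟨y, hy, huy⟩ := Set.mem_iUnion₂.1 (hst hu)
    exact Set.mem_iUnion₂.2 ⟨y, hy, hu, huy⟩
  refine (ht.biUnion fun y _ => Set.Subsingleton.finite ?_).subset hcover
  rintro u ⟨hu, huy⟩ v ⟨hv, hvy⟩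
  by_contra huv
  have := dist_triangle_right u v y
  linarith [hsep hu hv huv, mem_ball.1 huy, mem_ball.1 hvy]

section Tiles

variable {d : ℕ}

lemma IsTile.interior_nonempty {E : Set (Pt d)} (hE : IsTile E) : (interior E).Nonempty := by
  rw [Set.nonempty_iff_ne_empty]
  intro h
  exact hE.2.1.nonempty.ne_empty (by rw [hE.2.2, h, closure_empty])

lemma isTile_of_mem_tilesOf {X : Set (Patch d)} (hX : ∀ x ∈ X, IsTiling x) {E : Set (Pt d)}
    (hE : E ∈ TilesOf X) : IsTile E := by
  obtain ⟨x, hx, hEx⟩ := hE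
  exact (hX x hx).1.1 E hEx

/-- Tiles are the closures of their interiors, so a tile covered by `F` shares interior points
with a tile of `F`. -/
lemma IsPatch.mem_of_subset_psupp {y F : Patch d} (hy : IsPatch y) (hFy : F ⊆ y)
    {G : Set (Pt d)} (hG : G ∈ y) (hGF : G ⊆ psupp F) : G ∈ F := by
  obtain ⟨z, hz⟩ := (hy.1 G hG).interior_nonempty
  obtain ⟨F₀, hF₀, hzF₀⟩ := Set.mem_iUnion₂.1 (hGF (interior_subset hz))
  have hz' : z ∈ closure (interior F₀) := (hy.1 F₀ (hFy hF₀)).2.2 ▸ hzF₀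
  obtain ⟨w, hwG, hwF₀⟩ := mem_closure_iff.1 hz' _ isOpen_interior hz
  by_contra hGnot
  have hdisj := hy.2 G hG F₀ (hFy hF₀) (fun h => hGnot (h ▸ hF₀))
  exact (Set.eq_empty_iff_forall_notMem.1 hdisj) w ⟨hwG, hwF₀⟩

lemma IsPatch.subset_of_psupp_subset {y x F : Patch d} (hy : IsPatch y) (hxy : x ⊆ y)
    (hFy : F ⊆ y) (h : psupp x ⊆ psupp F) : x ⊆ F :=
  fun _ hG => hy.mem_of_subset_psupp hFy (hxy hG) ((subset_psupp hG).trans h)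

lemma IsPatch.le_dist_of_tileTrans_mem {x : Patch d} (hx : IsPatch x) {P : Set (Pt d)} {p : Pt d}
    {ε : ℝ} (hball : ball p ε ⊆ interior P) {u v : Pt d} (hu : tileTrans u P ∈ x)
    (hv : tileTrans v P ∈ x) (huv : tileTrans u P ≠ tileTrans v P) : ε ≤ dist u v := by
  by_contra! hlt
  have hε : 0 < ε := dist_nonneg.trans_lt hlt
  have hv' : v + p ∈ interior (tileTrans v P) := by
    rw [tileTrans_eq_vadd, interior_vadd]
    exact Set.vadd_mem_vadd_set (hball (mem_ball_self hε))
  have hu' : v + p ∈ interior (tileTrans u P) := by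
    rw [tileTrans_eq_vadd, interior_vadd]
    refine ⟨p + (v - u), hball ?_, by simp only [vadd_eq_add]; abel⟩
    rwa [mem_ball, dist_eq_norm, add_sub_cancel_left, ← dist_eq_norm, dist_comm]
  exact (Set.eq_empty_iff_forall_notMem.1 (hx.2 _ hu _ hv huv)) _ ⟨hu', hv'⟩

variable {l : ℕ} {X : Set (Patch d)} {Dp : Fin l → Set (Pt d)}

lemma IsPrototileBasis.finite_tiles_meeting (hX : ∀ x ∈ X, IsTiling x)
    (hDp : IsPrototileBasis X Dp) {x : Patch d} (hx : x ∈ X) {B : Set (Pt d)}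
    (hB : Bornology.IsBounded B) : {G | G ∈ x ∧ (G ∩ B).Nonempty}.Finite := by
  have hcover : {G | G ∈ x ∧ (G ∩ B).Nonempty} ⊆ ⋃ i, (tileTrans · (Dp i)) ''
      {u | tileTrans u (Dp i) ∈ x ∧ (tileTrans u (Dp i) ∩ B).Nonempty} := by
    rintro G ⟨hG, hGB⟩
    obtain ⟨i, u, rfl⟩ := hDp.2.2 G ⟨x, hx, hG⟩
    exact Set.mem_iUnion.2 ⟨i, u, ⟨hG, hGB⟩, rfl⟩
  refine (Set.finite_iUnion fun i => Set.Finite.image _ ?_).subset hcover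
  have hP := isTile_of_mem_tilesOf hX (hDp.1 i)
  obtain ⟨p, hp⟩ := hP.interior_nonempty
  obtain ⟨ε, hε, hball⟩ := Metric.isOpen_iff.1 isOpen_interior p hp
  refine finite_of_isBounded_of_pairwise_le_dist hε ((hB.sub hP.1.isBounded).subset ?_) ?_
  · rintro u ⟨-, z, ⟨w, hw, rfl⟩, hzB⟩
    exact ⟨u + w, hzB, w, hw, add_sub_cancel_right u w⟩
  · intro u hu v hv huv
    exact (hX x hx).1.le_dist_of_tileTrans_mem hball hu.1 hv.1
      (fun h => huv (tileTrans_left_injective hP.1 hP.2.1.nonempty h))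

lemma IsPrototileBasis.exists_finite_subset_psupp_superset (hX : ∀ x ∈ X, IsTiling x)
    (hDp : IsPrototileBasis X Dp) {x : Patch d} (hx : x ∈ X) {B : Set (Pt d)}
    (hB : Bornology.IsBounded B) : ∃ T ⊆ x, T.Finite ∧ B ⊆ psupp T := by
  refine ⟨_, fun G hG => hG.1, hDp.finite_tiles_meeting hX hx hB, fun z hz => ?_⟩
  obtain ⟨G, hG, hzG⟩ := Set.mem_iUnion₂.1 ((hX x hx).2 ▸ Set.mem_univ z : z ∈ psupp x)
  exact Set.mem_iUnion₂.2 ⟨G, ⟨hG, z, hzG, hz⟩, hzG⟩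

lemma IsPrototileBasis.exists_diam_le (hDp : IsPrototileBasis X Dp) :
    ∃ R, 0 ≤ R ∧ ∀ E ∈ TilesOf X, Metric.diam E ≤ R := by
  refine ⟨∑ i, Metric.diam (Dp i), by positivity, fun E hE => ?_⟩
  obtain ⟨i, u, rfl⟩ := hDp.2.2 E hE
  rw [tileTrans_eq_vadd, diam_vadd]
  exact Finset.single_le_sum (fun j _ => Metric.diam_nonneg) (Finset.mem_univ i)

end Tiles

section Substitution

variable {d k : ℕ} {X : Set (Patch d)}

lemma substPatch_mono (S : Substitution d X) : Monotone (substPatch S) :=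
  fun _ _ h => Set.biUnion_subset_biUnion_left h

lemma substPatch_biUnion (S : Substitution d X) {ι : Type*} (s : Set ι) (f : ι → Patch d) :
    substPatch S (⋃ i ∈ s, f i) = ⋃ i ∈ s, substPatch S (f i) := by
  ext E
  simp only [substPatch, Set.mem_iUnion, exists_prop]
  tauto

lemma substPatch_patchTrans (S : Substitution d X) (t : Pt d) (x : Patch d) :
    substPatch S (patchTrans t x) = patchTrans (S.lam • t) (substPatch S x) := by
  simp only [substPatch, patchTrans, Set.biUnion_image, S.equivar, Set.image_iUnion₂]

lemma psupp_substPatch (S : Substitution d X) {x : Patch d} (hx : x ∈ Patches X) :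
    psupp (substPatch S x) = S.lam • psupp x := by
  obtain ⟨-, y, hy, hxy⟩ := hx
  rw [substPatch, psupp_biUnion, psupp, Set.smul_set_iUnion₂]
  exact Set.iUnion₂_congr fun D hD => S.supp_eq D ⟨y, hy, hxy hD⟩

/-- The dilatation factor `λ_{a_1} ⋯ λ_{a_n}` of `S^n_ā`. -/
def lamSeq (S : Fin k → Substitution d X) (a : ℕ → Fin k) (n : ℕ) : ℝ :=
  ∏ i ∈ Finset.range n, (S (a i)).lam

variable (S : Fin k → Substitution d X)

lemma lamSeq_succ' (a : ℕ → Fin k) (n : ℕ) :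
    lamSeq S a (n + 1) = (S (a 0)).lam * lamSeq S (fun i => a (i + 1)) n :=
  Finset.prod_range_succ' _ n |>.trans (mul_comm _ _)

lemma lamSeq_succ (a : ℕ → Fin k) (n : ℕ) :
    lamSeq S a (n + 1) = lamSeq S a n * (S (a n)).lam :=
  Finset.prod_range_succ _ n

lemma lamSeq_nonneg (a : ℕ → Fin k) (n : ℕ) : 0 ≤ lamSeq S a n :=
  Finset.prod_nonneg fun i _ => zero_le_one.trans (S (a i)).one_lt_lam.le

lemma lamSeq_monotone (a : ℕ → Fin k) : Monotone (lamSeq S a) := by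
  refine monotone_nat_of_le_succ fun n => ?_
  rw [lamSeq_succ]
  exact le_mul_of_one_le_right (lamSeq_nonneg S a n) (S (a n)).one_lt_lam.le

lemma substSeq_mono (a : ℕ → Fin k) (n : ℕ) : Monotone (substSeq S a n) := by
  induction n generalizing a with
  | zero => exact fun _ _ h => h
  | succ n ih => exact (substPatch_mono _).comp (ih _)

lemma substSeq_eq_biUnion (a : ℕ → Fin k) (n : ℕ) (x : Patch d) :
    substSeq S a n x = ⋃ E ∈ x, substSeq S a n {E} := by
  induction n generalizing a x with
  | zero => simp [substSeq]
  | succ n ih =>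
    simp only [substSeq]
    rw [ih _ x, substPatch_biUnion]

lemma substSeq_patchTrans (a : ℕ → Fin k) (n : ℕ) (t : Pt d) (x : Patch d) :
    substSeq S a n (patchTrans t x) = patchTrans (lamSeq S a n • t) (substSeq S a n x) := by
  induction n generalizing a t with
  | zero => simp [substSeq, lamSeq]
  | succ n ih =>
    simp only [substSeq]
    rw [ih, substPatch_patchTrans, lamSeq_succ', smul_smul]

lemma substSeq_add (a : ℕ → Fin k) (n m : ℕ) (x : Patch d) :
    substSeq S a (n + m) x = substSeq S a n (substSeq S (fun i => a (n + i)) m x) := by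
  induction n generalizing a with
  | zero => simp [substSeq]
  | succ n ih =>
    rw [Nat.add_right_comm]
    simp only [substSeq]
    rw [ih]
    simp only [Nat.add_right_comm]

lemma substSeq_mem_patches (a : ℕ → Fin k) (n : ℕ) {x : Patch d} (hx : x ∈ Patches X) :
    substSeq S a n x ∈ Patches X := by
  induction n generalizing a with
  | zero => exact hx
  | succ n ih => exact (S (a 0)).maps_patches _ (ih _)

lemma psupp_substSeq (a : ℕ → Fin k) (n : ℕ) {x : Patch d} (hx : x ∈ Patches X) :
    psupp (substSeq S a n x) = lamSeq S a n • psupp x := by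
  induction n generalizing a with
  | zero => simp [substSeq, lamSeq]
  | succ n ih =>
    simp only [substSeq]
    rw [psupp_substPatch _ (substSeq_mem_patches S _ n hx), ih, smul_smul, lamSeq_succ']

end Substitution

section Supertiles

variable {d k : ℕ} {X : Set (Patch d)} (S : Fin k → Substitution d X) (a : ℕ → Fin k)

lemma singleton_mem_patches {E : Set (Pt d)} (hE : E ∈ TilesOf X) :
    ({E} : Patch d) ∈ Patches X := by
  obtain ⟨x, hx, hEx⟩ := hE
  exact ⟨Set.finite_singleton E, x, hx, Set.singleton_subset_iff.2 hEx⟩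

lemma psupp_substSeq_singleton (n : ℕ) {E : Set (Pt d)} (hE : E ∈ TilesOf X) :
    psupp (substSeq S a n {E}) = lamSeq S a n • E := by
  rw [psupp_substSeq S a n (singleton_mem_patches hE), psupp_singleton]

lemma isBounded_psupp_substSeq_singleton (hX : ∀ x ∈ X, IsTiling x) (n : ℕ) {E : Set (Pt d)}
    (hE : E ∈ TilesOf X) : Bornology.IsBounded (psupp (substSeq S a n {E})) := by
  rw [psupp_substSeq_singleton S a n hE]
  exact (isTile_of_mem_tilesOf hX hE).1.isBounded.smul₀ _

lemma diam_psupp_substSeq_singleton (n : ℕ) {E : Set (Pt d)} (hE : E ∈ TilesOf X) :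
    Metric.diam (psupp (substSeq S a n {E})) = lamSeq S a n * Metric.diam E := by
  rw [psupp_substSeq_singleton S a n hE, diam_smul₀, Real.norm_of_nonneg (lamSeq_nonneg S a n)]

lemma psupp_substSeq_singleton_subset_closedBall (hX : ∀ x ∈ X, IsTiling x) (n : ℕ)
    {E : Set (Pt d)} (hE : E ∈ TilesOf X) {p : Pt d} (hp : p ∈ psupp (substSeq S a n {E})) :
    psupp (substSeq S a n {E}) ⊆ closedBall p (lamSeq S a n * Metric.diam E) := fun _ hz =>
  mem_closedBall.2 <| diam_psupp_substSeq_singleton S a n hE ▸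
    Metric.dist_le_diam_of_mem (isBounded_psupp_substSeq_singleton S a hX n hE) hz hp

/-- A level-`M` supertile is the union of the level-`m` supertiles of the tiles of a
level-`(M - m)` supertile of the shifted sequence. -/
lemma exists_substSeq_subset_of_mem_psupp {m M : ℕ} (hmM : m ≤ M) {D : Set (Pt d)}
    (hD : D ∈ TilesOf X) {z : Pt d} (hz : z ∈ psupp (substSeq S a M {D})) :
    ∃ E ∈ TilesOf X, substSeq S a m {E} ⊆ substSeq S a M {D} ∧
      z ∈ psupp (substSeq S a m {E}) := by
  obtain ⟨j, rfl⟩ := Nat.exists_eq_add_of_le hmM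
  have hdecomp := (substSeq_add S a m j {D}).trans (substSeq_eq_biUnion S a m _)
  rw [hdecomp, psupp_biUnion] at hz
  obtain ⟨E, hE, hzE⟩ := Set.mem_iUnion₂.1 hz
  obtain ⟨-, x, hx, hsub⟩ :=
    substSeq_mem_patches S (fun i => a (m + i)) j (singleton_mem_patches hD)
  refine ⟨E, ⟨x, hx, hsub hE⟩, ?_, hzE⟩
  exact hdecomp ▸ Set.subset_biUnion_of_mem (u := fun E => substSeq S a m {E}) hE

lemma le_of_closedBall_subset_psupp_substSeq [Nontrivial (Pt d)] (hX : ∀ x ∈ X, IsTiling x)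
    {D : Set (Pt d)} (hD : D ∈ TilesOf X) {m M : ℕ} {p : Pt d} {ρ : ℝ} (hρ : 0 ≤ ρ)
    (hball : closedBall p ρ ⊆ psupp (substSeq S a M {D}))
    (hm : lamSeq S a m * Metric.diam D < 2 * ρ) : m ≤ M := by
  by_contra! hMm
  have := Metric.diam_mono hball (isBounded_psupp_substSeq_singleton S a hX M hD)
  rw [Metric.diam_closedBall_eq p hρ, diam_psupp_substSeq_singleton S a M hD] at this
  have := mul_le_mul_of_nonneg_right (lamSeq_monotone S a hMm.le) (Metric.diam_nonneg (s := D))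
  linarith

lemma exists_substSeq_subset_closedBall [Nontrivial (Pt d)] (hX : ∀ x ∈ X, IsTiling x) {R : ℝ}
    (hR : ∀ E ∈ TilesOf X, Metric.diam E ≤ R) {D : Set (Pt d)} (hD : D ∈ TilesOf X)
    {m M : ℕ} {p : Pt d} {ρ : ℝ} (hρ : 0 < ρ) (hmρ : lamSeq S a m * R ≤ ρ)
    (hball : closedBall p ρ ⊆ psupp (substSeq S a M {D})) :
    ∃ E ∈ TilesOf X, substSeq S a m {E} ⊆ substSeq S a M {D} ∧
      psupp (substSeq S a m {E}) ⊆ closedBall p ρ := by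
  have hdiam {E : Set (Pt d)} (hE : E ∈ TilesOf X) : lamSeq S a m * Metric.diam E ≤ ρ :=
    (mul_le_mul_of_nonneg_left (hR E hE) (lamSeq_nonneg S a m)).trans hmρ
  have hmM : m ≤ M :=
    le_of_closedBall_subset_psupp_substSeq S a hX hD hρ.le hball (by linarith [hdiam hD])
  obtain ⟨E, hE, hEM, hpE⟩ :=
    exists_substSeq_subset_of_mem_psupp S a hmM hD (hball (mem_closedBall_self hρ.le))
  exact ⟨E, hE, hEM, (psupp_substSeq_singleton_subset_closedBall S a hX m hE hpE).trans
    (closedBall_subset_closedBall (hdiam hE))⟩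

end Supertiles

section Primitivity

variable {d k l : ℕ} {X : Set (Patch d)} {Dp : Fin l → Set (Pt d)}
  {S : Fin k → Substitution d X}

lemma exists_tileTrans_mem_map_of_structMat_pos {T : Substitution d X} {i j : Fin l}
    (h : 0 < structMat Dp T i j) : ∃ t, tileTrans t (Dp i) ∈ T.map (Dp j) := by
  obtain ⟨E, hE, t, rfl⟩ := Set.nonempty_of_ncard_ne_zero h.ne'
  exact ⟨t, hE⟩

lemma exists_tileTrans_mem_substSeq_of_matSeq_pos {a : ℕ → Fin k} {n : ℕ} {i j : Fin l}
    (h : 0 < matSeq (fun i => structMat Dp (S i)) a n i j) :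
    ∃ t, tileTrans t (Dp i) ∈ substSeq S a n {Dp j} := by
  induction n generalizing a i with
  | zero =>
    obtain rfl : i = j := by
      by_contra hij
      simp [matSeq, hij] at h
    exact ⟨0, by simp [substSeq, tileTrans_eq_vadd]⟩
  | succ n ih =>
    rw [matSeq, Matrix.mul_apply] at h
    obtain ⟨q, -, hq⟩ := Finset.sum_pos_iff.1 h
    obtain ⟨hiq, hqj⟩ := CanonicallyOrderedAdd.mul_pos.1 hq
    obtain ⟨t, ht⟩ := ih hqj
    obtain ⟨s, hs⟩ := exists_tileTrans_mem_map_of_structMat_pos hiq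
    refine ⟨(S (a 0)).lam • t + s, Set.mem_biUnion ht ?_⟩
    rw [(S (a 0)).equivar, ← tileTrans_tileTrans]
    exact tileTrans_mem_patchTrans hs _

lemma IsPrototileBasis.exists_patchTrans_substSeq_subset (hDp : IsPrototileBasis X Dp)
    {a : ℕ → Fin k} {n L : ℕ}
    (hpos : ∀ p q, 0 < matSeq (fun i => structMat Dp (S i)) (fun m => a (n + m)) L p q)
    {D E : Set (Pt d)} (hD : D ∈ TilesOf X) (hE : E ∈ TilesOf X) :
    ∃ t, patchTrans t (substSeq S a n {D}) ⊆ substSeq S a (n + L) {E} := by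
  obtain ⟨i, s, rfl⟩ := hDp.2.2 D hD
  obtain ⟨q, u, rfl⟩ := hDp.2.2 E hE
  obtain ⟨v, hv⟩ := exists_tileTrans_mem_substSeq_of_matSeq_pos (hpos i q)
  set w := lamSeq S (fun m => a (n + m)) L • u + v - s
  have hw : tileTrans w (tileTrans s (Dp i)) ∈
      substSeq S (fun m => a (n + m)) L {tileTrans u (Dp q)} := by
    rw [← patchTrans_singleton, substSeq_patchTrans, tileTrans_tileTrans, sub_add_cancel,
      ← tileTrans_tileTrans]
    exact tileTrans_mem_patchTrans hv _
  refine ⟨lamSeq S a n • w, ?_⟩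
  rw [← substSeq_patchTrans, patchTrans_singleton, substSeq_add]
  exact substSeq_mono S a n (Set.singleton_subset_iff.2 hw)

end Primitivity

lemma exists_patchTrans_subset_substSeq {d k l : ℕ} {X : Set (Patch d)}
    (hX : ∀ x ∈ X, IsTiling x) {Dp : Fin l → Set (Pt d)} (hDp : IsPrototileBasis X Dp)
    {S : Fin k → Substitution d X} {a : ℕ → Fin k} {D : Set (Pt d)} {x : Patch d}
    (hx : x ∈ multiSpace S a D) (c : Pt d) (ρ : ℝ) :
    ∃ T ⊆ x, ∃ M t, patchTrans t T ⊆ substSeq S a M {D} ∧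
      closedBall (t + c) ρ ⊆ psupp (patchTrans t T) := by
  obtain ⟨T, hTx, hTfin, hcT⟩ :=
    hDp.exists_finite_subset_psupp_superset hX hx.1 (isBounded_closedBall (x := c) (r := ρ))
  obtain ⟨M, -, t, htT⟩ := hx.2 T hTx hTfin
  refine ⟨T, hTx, M, t, htT, ?_⟩
  rw [psupp_patchTrans, ← vadd_eq_add, ← vadd_closedBall]
  exact Set.vadd_set_mono hcT

theorem multiSpace_repetitive_general
    {d l k : ℕ} (hd : 0 < d)
    (X : Set (Patch d)) (hX : ∀ x ∈ X, IsTiling x)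
    (Dp : Fin l → Set (Pt d)) (hDp : IsPrototileBasis X Dp)
    (S : Fin k → Substitution d X)
    (D : Set (Pt d)) (hD : D ∈ TilesOf X)
    (a : ℕ → Fin k)
    (hprim : SeqPrimitive (fun i => structMat Dp (S i)) a)
    :
    ∀ x ∈ multiSpace S a D, ∀ x' ⊆ x, x'.Finite →
      ∃ r : ℝ, 0 < r ∧ ∀ c : Pt d, ∃ t : Pt d,
        psupp (patchTrans t x') ⊆ closedBall c r ∧ patchTrans t x' ⊆ x := by
  have : Nonempty (Fin d) := ⟨⟨0, hd⟩⟩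
  intro x hx x' hx' hx'fin
  obtain ⟨n, -, t₀, ht₀⟩ := hx.2 x' hx' hx'fin
  obtain ⟨N, hN⟩ := hprim n
  obtain ⟨R, hR, hdiam⟩ := hDp.exists_diam_le
  set ρ := lamSeq S a (n + (N + 1)) * R + 1
  refine ⟨ρ, by positivity [lamSeq_nonneg S a (n + (N + 1))], fun c => ?_⟩
  obtain ⟨T, hTx, M, t, htT, hball⟩ := exists_patchTrans_subset_substSeq hX hDp hx c ρ
  obtain ⟨E, hE, hEM, hEball⟩ := exists_substSeq_subset_closedBall S a hX hdiam hD
    (by positivity [lamSeq_nonneg S a (n + (N + 1))]) (le_add_of_nonneg_right zero_le_one)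
    (hball.trans (psupp_mono htT))
  obtain ⟨s, hs⟩ := hDp.exists_patchTrans_substSeq_subset hN hD hE
  have hcopy : patchTrans (s + t₀) x' ⊆ substSeq S a (n + (N + 1)) {E} := by
    rw [← patchTrans_patchTrans]
    exact (patchTrans_mono s ht₀).trans hs
  obtain ⟨-, y, hy, hMy⟩ := substSeq_mem_patches S a M (singleton_mem_patches hD)
  have hcopyT : patchTrans (s + t₀) x' ⊆ patchTrans t T :=
    (hX y hy).1.subset_of_psupp_subset (hcopy.trans (hEM.trans hMy)) (htT.trans hMy)
      ((psupp_mono hcopy).trans (hEball.trans hball))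
  refine ⟨-t + (s + t₀), ?_, ?_⟩
  · rw [← psupp_patchTrans_subset_closedBall_iff t, patchTrans_patchTrans, add_neg_cancel_left]
    exact (psupp_mono hcopy).trans hEball
  · rw [← patchTrans_subset_patchTrans_iff t, patchTrans_patchTrans, add_neg_cancel_left]
    exact hcopyT.trans (patchTrans_mono t hTx)

/-- Every tiling of `X_ā` is repetitive. -/
theorem multiSpace_repetitive
    {d l k : ℕ} (hd : 0 < d) (hl : 0 < l) (hk : 0 < k)
    (X : Set (Patch d)) (hX : ∀ x ∈ X, IsTiling x)
    (hXinv : TransInvariant X) (hXflc : FLC X)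
    (Dp : Fin l → Set (Pt d)) (hDp : IsPrototileBasis X Dp)
    (S : Fin k → Substitution d X)
    (D : Set (Pt d)) (hD : D ∈ TilesOf X)
    (a : ℕ → Fin k)
    (hprim : SeqPrimitive (fun i => structMat Dp (S i)) a)
    :
    ∀ x ∈ multiSpace S a D, ∀ x' ⊆ x, x'.Finite →
      ∃ r : ℝ, 0 < r ∧ ∀ c : Pt d, ∃ t : Pt d,
        psupp (patchTrans t x') ⊆ closedBall c r ∧ patchTrans t x' ⊆ x :=
  multiSpace_repetitive_general hd X hX Dp hDp S D hD a hprim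

end
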